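/- Two distinct points m, m' ∈ E are conjugate (inverse) with respect to a non-isotropic cycle p if and only if p lies in the two-dimensional linear span of the zero circles q(X) = X·X − 2m·X + m·m and q*(X) = X·X − 2m'·X + m'·m'. -/

import Mathlib

/-!
The cycle pairing is a symmetric bilinear form for which every zero circle is isotropic, while
the zero circles at distinct `m, m'` pair to `-2 B(m - m', m - m') ≠ 0` by anisotropy. For isotropic `q, q'` with
`⟨q, q'⟩ ≠ 0`, writing `p = a q + b q'` gives `⟨p, p⟩ = 2ab ⟨q, q'⟩` and `⟨q, p⟩ = b ⟨q, q'⟩`,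
so the reflection in a non-isotropic `p` sends `q` to `-(b / a) q'`. Conversely, if the
reflection sends `q` to `λ q'`, then `q - λ q'` is a multiple of `p`, and a nonzero one since
`q` is not a multiple of the isotropic `q'`.
-/

namespace LinearMap.BilinForm

variable {k V : Type*} [Field k] [AddCommGroup V] [Module k V]

theorem reflection_eq_smul_iff_mem_span_pair {β : LinearMap.BilinForm k V} (hβ : β.IsSymm)
    {p q q' : V} (hp : β p p ≠ 0) (hq : β q q = 0) (hq' : β q' q' = 0) (hqq' : β q q' ≠ 0) :
    (∃ lam : k, lam ≠ 0 ∧ q - (2 * (β q p / β p p)) • p = lam • q') ↔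
      p ∈ Submodule.span k ({q, q'} : Set V) := by
  constructor
  · rintro ⟨lam, -, hrefl⟩
    set c := 2 * (β q p / β p p)
    have hc : c ≠ 0 := by
      rintro hc
      rw [hc, zero_smul, sub_zero] at hrefl
      exact hqq' (by rw [hrefl, map_smul, LinearMap.smul_apply, hq', smul_zero])
    have hcp : c • p = q - lam • q' := by rw [← hrefl, sub_sub_cancel]
    refine Submodule.mem_span_pair.mpr ⟨c⁻¹, -(c⁻¹ * lam), ?_⟩
    rw [← inv_smul_smul₀ hc p, hcp]
    module
  · intro hmem
    obtain ⟨a, b, rfl⟩ := Submodule.mem_span_pair.mp hmem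
    have hsymm : β q' q = β q q' := hβ.eq q' q
    have hpp : β (a • q + b • q') (a • q + b • q') = 2 * a * b * β q q' := by
      simp only [map_add, map_smul, LinearMap.add_apply, LinearMap.smul_apply, smul_eq_mul,
        hq, hq', hsymm]
      ring
    have hqp : β q (a • q + b • q') = b * β q q' := by
      simp only [map_add, map_smul, smul_eq_mul, hq]
      ring
    have hne : 2 * a * b * β q q' ≠ 0 := hpp ▸ hp
    simp only [mul_ne_zero_iff] at hne
    obtain ⟨⟨⟨h2, ha⟩, hb⟩, -⟩ := hne
    have hcoef : 2 * (β q (a • q + b • q') / β (a • q + b • q') (a • q + b • q')) = a⁻¹ := by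
      rw [hqp, hpp]
      field_simp
    refine ⟨-(b / a), neg_ne_zero.mpr (div_ne_zero hb ha), ?_⟩
    rw [hcoef, smul_add, smul_smul, inv_mul_cancel₀ ha, one_smul]
    module

end LinearMap.BilinForm

section Cycles

variable {k E : Type*} [Field k] [AddCommGroup E] [Module k E]

/-- The cycle `(a, b, c)` stands for the quadric `a X·X + b·X + c`. -/
def cyclePairing (B : LinearMap.BilinForm k E) : LinearMap.BilinForm k (k × E × k) :=
  LinearMap.mk₂ k (fun p q => B p.2.1 q.2.1 - 2 * p.1 * q.2.2 - 2 * q.1 * p.2.2)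
    (fun _ _ _ => by simp only [Prod.fst_add, Prod.snd_add, map_add, LinearMap.add_apply]; ring)
    (fun _ _ _ => by
      simp only [Prod.smul_fst, Prod.smul_snd, map_smul, LinearMap.smul_apply, smul_eq_mul]; ring)
    (fun _ _ _ => by simp only [Prod.fst_add, Prod.snd_add, map_add]; ring)
    (fun _ _ _ => by simp only [Prod.smul_fst, Prod.smul_snd, map_smul, smul_eq_mul]; ring)

@[simp]
theorem cyclePairing_apply (B : LinearMap.BilinForm k E) (p q : k × E × k) :
    cyclePairing B p q = B p.2.1 q.2.1 - 2 * p.1 * q.2.2 - 2 * q.1 * p.2.2 :=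
  rfl

theorem cyclePairing_isSymm {B : LinearMap.BilinForm k E} (hB : B.IsSymm) :
    (cyclePairing B).IsSymm := by
  refine LinearMap.BilinForm.isSymm_def.mpr fun p q => ?_
  simp only [cyclePairing_apply, hB.eq p.2.1 q.2.1]
  ring

def zeroCircle (B : LinearMap.BilinForm k E) (m : E) : k × E × k :=
  (1, -((2 : k) • m), B m m)

theorem cyclePairing_zeroCircle_self (B : LinearMap.BilinForm k E) (m : E) :
    cyclePairing B (zeroCircle B m) (zeroCircle B m) = 0 := by
  simp only [cyclePairing_apply, zeroCircle, map_neg, map_smul, LinearMap.neg_apply,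
    LinearMap.smul_apply, smul_eq_mul]
  ring

theorem cyclePairing_zeroCircle {B : LinearMap.BilinForm k E} (hB : B.IsSymm) (m m' : E) :
    cyclePairing B (zeroCircle B m) (zeroCircle B m') = -2 * B (m - m') (m - m') := by
  simp only [cyclePairing_apply, zeroCircle, map_neg, map_smul, map_sub, LinearMap.neg_apply,
    LinearMap.smul_apply, LinearMap.sub_apply, smul_eq_mul, hB.eq m' m]
  ring

theorem cyclePairing_zeroCircle_ne_zero (hchar : (2 : k) ≠ 0) {B : LinearMap.BilinForm k E}
    (hB : B.IsSymm) (haniso : ∀ x : E, B x x = 0 → x = 0) {m m' : E} (hmm : m ≠ m') :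
    cyclePairing B (zeroCircle B m) (zeroCircle B m') ≠ 0 := by
  rw [cyclePairing_zeroCircle hB]
  exact mul_ne_zero (neg_ne_zero.mpr hchar) fun h => hmm (sub_eq_zero.mp (haniso _ h))

end Cycles

/-- Two distinct points `m, m'` of `E` are conjugate with respect to a non-isotropic
cycle `p` (i.e. the reflection defined by `p` maps the zero circle at `m` to a nonzero
scalar multiple of the zero circle at `m'`) iff `p` lies in the linear span of the two
zero circles at `m` and `m'`. -/
theorem stmt_14 {k : Type*} [Field k] (hchar : (2 : k) ≠ 0)
    {E : Type*} [AddCommGroup E] [Module k E]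
    (B : LinearMap.BilinForm k E) (hB : B.IsSymm)
    (haniso : ∀ x : E, B x x = 0 → x = 0)
    (cyc : (k × E × k) → (k × E × k) → k)
    (hcyc : ∀ p q : k × E × k,
      cyc p q = B p.2.1 q.2.1 - 2 * p.1 * q.2.2 - 2 * q.1 * p.2.2)
    (m m' : E) (hmm : m ≠ m')
    (p : k × E × k) (hpiso : cyc p p ≠ 0)
    (q q' : k × E × k)
    (hq : q = ((1 : k), -((2 : k) • m), B m m))
    (hq' : q' = ((1 : k), -((2 : k) • m'), B m' m')) :
    (∃ lam : k, lam ≠ 0 ∧ q - (2 * (cyc q p / cyc p p)) • p = lam • q') ↔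
      p ∈ Submodule.span k ({q, q'} : Set (k × E × k)) := by
  obtain rfl : cyc = fun x y => cyclePairing B x y := funext₂ hcyc
  obtain rfl : q = zeroCircle B m := hq
  obtain rfl : q' = zeroCircle B m' := hq'
  exact LinearMap.BilinForm.reflection_eq_smul_iff_mem_span_pair (cyclePairing_isSymm hB) hpiso
    (cyclePairing_zeroCircle_self B m) (cyclePairing_zeroCircle_self B m')
    (cyclePairing_zeroCircle_ne_zero hchar hB haniso hmm)
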